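/- Let a, b, c be real numbers with b ≠ 0, let a₀ : ℝ → ℝ be twice continuously differentiable, define φ(x̄) = (x̄ − c(1 + a·x̄))/(b(1 + a·x̄)), t(x̄) = 1 + a·x̄, and ā₀(x̄) = a₀(φ(x̄))/(b³ t(x̄)⁶) on {x̄ : t(x̄) ≠ 0}. Then for every x̄ with t(x̄) ≠ 0 and a₀(φ(x̄)) ≠ 0, one has (ā₀″(x̄) − (7/6)ā₀′(x̄)²/ā₀(x̄))³/ā₀(x̄)⁵ = (a₀″(φ(x̄)) − (7/6)a₀′(φ(x̄))²/a₀(φ(x̄)))³/a₀(φ(x̄))⁵. -/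

import Mathlib

/-!
With `g = φ'` one has `ā₀ = (a₀ ∘ φ) · g³`. Writing `I(f) = f″ − (7/6) f′²/f`, a direct computation gives
`I(ā₀) = g⁵ · I(a₀) ∘ φ + 3 ā₀ · S(φ)`, where `S(φ) = (g g″ − (3/2) g′²)/g²` is the Schwarzian derivative
of `φ`. The Möbius map `φ` has `S(φ) = 0`, so `I(ā₀) = g⁵ · I(a₀) ∘ φ`, and the weights cancel in
`I³/a₀⁵` since `3 · 5 = 5 · 3`.
-/

noncomputable def phi (a b c : ℝ) (x : ℝ) : ℝ :=
  (x - c * (1 + a * x)) / (b * (1 + a * x))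

noncomputable def abar0 (a b c : ℝ) (a0 : ℝ → ℝ) (x : ℝ) : ℝ :=
  a0 (phi a b c x) / (b ^ 3 * (1 + a * x) ^ 6)

open Filter Topology

/-- `relInvariant f` is `I(f)` above and `psi31 f` is the paper's `Ψ₃^{3,1}` for the coefficient `f`. -/
noncomputable def relInvariant (f : ℝ → ℝ) (x : ℝ) : ℝ :=
  iteratedDeriv 2 f x - 7 / 6 * deriv f x ^ 2 / f x

noncomputable def psi31 (f : ℝ → ℝ) (x : ℝ) : ℝ :=
  relInvariant f x ^ 3 / f x ^ 5

section CoordinateChange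

variable {u φ g g₁ : ℝ → ℝ} {g₂ x : ℝ}

theorem hasDerivAt_comp_mul_cube (hu : Differentiable ℝ u) {y : ℝ}
    (hφ : HasDerivAt φ (g y) y) (hg : HasDerivAt g (g₁ y) y) :
    HasDerivAt (fun y => u (φ y) * g y ^ 3)
      (deriv u (φ y) * g y ^ 4 + 3 * u (φ y) * g y ^ 2 * g₁ y) y := by
  refine (((hu _).hasDerivAt.comp y hφ).fun_mul (hg.fun_pow 3)).congr_deriv ?_
  norm_num
  ring

theorem hasDerivAt_deriv_comp_mul_cube (hu : ContDiff ℝ 2 u)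
    (hφ : HasDerivAt φ (g x) x) (hg : HasDerivAt g (g₁ x) x) (hg₁ : HasDerivAt g₁ g₂ x) :
    HasDerivAt (fun y => deriv u (φ y) * g y ^ 4 + 3 * u (φ y) * g y ^ 2 * g₁ y)
      (iteratedDeriv 2 u (φ x) * g x ^ 5 + 7 * deriv u (φ x) * g x ^ 3 * g₁ x
        + 6 * u (φ x) * g x * g₁ x ^ 2 + 3 * u (φ x) * g x ^ 2 * g₂) x := by
  have hu₁ : HasDerivAt (fun y => u (φ y)) (deriv u (φ x) * g x) x :=
    ((hu.differentiable (by norm_num)) _).hasDerivAt.comp x hφ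
  have hu₂ : HasDerivAt (fun y => deriv u (φ y)) (iteratedDeriv 2 u (φ x) * g x) x := by
    have hdu : Differentiable ℝ (deriv u) := by
      simpa only [iteratedDeriv_one] using hu.differentiable_iteratedDeriv 1 (by norm_num)
    rw [iteratedDeriv_succ, iteratedDeriv_one]
    exact (hdu _).hasDerivAt.comp x hφ
  refine ((hu₂.fun_mul (hg.fun_pow 4)).fun_add
    (((hu₁.const_mul 3).fun_mul (hg.fun_pow 2)).fun_mul hg₁)).congr_deriv ?_
  norm_num
  ring

/-- `hS` says that the Schwarzian derivative of `φ` vanishes at `x`, in terms of `g = φ'`. -/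
theorem relInvariant_comp_mul_cube (hu : ContDiff ℝ 2 u)
    (hφ : ∀ᶠ y in 𝓝 x, HasDerivAt φ (g y) y) (hg : ∀ᶠ y in 𝓝 x, HasDerivAt g (g₁ y) y)
    (hg₁ : HasDerivAt g₁ g₂ x) (hS : g x * g₂ = 3 / 2 * g₁ x ^ 2)
    (hux : u (φ x) ≠ 0) (hgx : g x ≠ 0) :
    relInvariant (fun y => u (φ y) * g y ^ 3) x = g x ^ 5 * relInvariant u (φ x) := by
  have hd : deriv (fun y => u (φ y) * g y ^ 3) =ᶠ[𝓝 x]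
      fun y => deriv u (φ y) * g y ^ 4 + 3 * u (φ y) * g y ^ 2 * g₁ y :=
    (hφ.and hg).mono fun y ⟨hφy, hgy⟩ =>
      (hasDerivAt_comp_mul_cube (hu.differentiable (by norm_num)) hφy hgy).deriv
  have hd₂ : iteratedDeriv 2 (fun y => u (φ y) * g y ^ 3) x =
      iteratedDeriv 2 u (φ x) * g x ^ 5 + 7 * deriv u (φ x) * g x ^ 3 * g₁ x
        + 6 * u (φ x) * g x * g₁ x ^ 2 + 3 * u (φ x) * g x ^ 2 * g₂ := by
    rw [iteratedDeriv_succ, iteratedDeriv_one, hd.deriv_eq]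
    exact (hasDerivAt_deriv_comp_mul_cube hu hφ.self_of_nhds hg.self_of_nhds hg₁).deriv
  rw [relInvariant, relInvariant, hd₂, hd.eq_of_nhds]
  field_simp
  linear_combination (18 * u (φ x) ^ 2) * hS

theorem psi31_comp_mul_cube (hu : ContDiff ℝ 2 u)
    (hφ : ∀ᶠ y in 𝓝 x, HasDerivAt φ (g y) y) (hg : ∀ᶠ y in 𝓝 x, HasDerivAt g (g₁ y) y)
    (hg₁ : HasDerivAt g₁ g₂ x) (hS : g x * g₂ = 3 / 2 * g₁ x ^ 2)
    (hux : u (φ x) ≠ 0) (hgx : g x ≠ 0) :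
    psi31 (fun y => u (φ y) * g y ^ 3) x = psi31 u (φ x) := by
  rw [psi31, psi31, relInvariant_comp_mul_cube hu hφ hg hg₁ hS hux hgx]
  field_simp

end CoordinateChange

section Moebius

theorem hasDerivAt_one_add_mul (a x : ℝ) : HasDerivAt (fun y => 1 + a * y) a x := by
  simpa using ((hasDerivAt_id x).const_mul a).const_add 1

variable {a b : ℝ}

theorem hasDerivAt_inv_mul_pow (hb : b ≠ 0) (n : ℕ) {x : ℝ} (ht : 1 + a * x ≠ 0) :
    HasDerivAt (fun y => (b * (1 + a * y) ^ n)⁻¹) (-(n * a) * (b * (1 + a * x) ^ (n + 1))⁻¹) x := by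
  refine ((((hasDerivAt_one_add_mul a x).fun_pow n).const_mul b).fun_inv
    (mul_ne_zero hb (pow_ne_zero n ht))).congr_deriv ?_
  rcases n with _ | n
  · simp
  · rw [Nat.add_sub_cancel]
    field_simp
    ring

theorem hasDerivAt_phi (c : ℝ) (hb : b ≠ 0) {x : ℝ} (ht : 1 + a * x ≠ 0) :
    HasDerivAt (phi a b c) (b * (1 + a * x) ^ 2)⁻¹ x := by
  refine (((hasDerivAt_id' x).fun_sub ((hasDerivAt_one_add_mul a x).const_mul c)).fun_div
    ((hasDerivAt_one_add_mul a x).const_mul b) (mul_ne_zero hb ht)).congr_deriv ?_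
  field_simp
  ring

theorem abar0_eq_comp_mul_cube (c : ℝ) (a0 : ℝ → ℝ) :
    abar0 a b c a0 = fun y => a0 (phi a b c y) * (b * (1 + a * y) ^ 2)⁻¹ ^ 3 := by
  funext y
  simp only [abar0, div_eq_mul_inv, inv_pow, mul_pow, ← pow_mul]

end Moebius

/-- the invariant `Ψ₃^{3,1} = (a₀″ − (7/6)a₀′²/a₀)³ / a₀⁵` of the
canonical form `y′′′ + a₀ y = 0` is an absolute invariant of the structure
invariance group. -/
theorem stmt_11 (a b c : ℝ) (hb : b ≠ 0) (a0 : ℝ → ℝ) (ha0 : ContDiff ℝ 2 a0) :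
    ∀ xb : ℝ, 1 + a * xb ≠ 0 → a0 (phi a b c xb) ≠ 0 →
      (iteratedDeriv 2 (abar0 a b c a0) xb
          - (7 / 6) * (deriv (abar0 a b c a0) xb) ^ 2 / abar0 a b c a0 xb) ^ 3
        / (abar0 a b c a0 xb) ^ 5
      = (iteratedDeriv 2 a0 (phi a b c xb)
          - (7 / 6) * (deriv a0 (phi a b c xb)) ^ 2 / a0 (phi a b c xb)) ^ 3
        / (a0 (phi a b c xb)) ^ 5 := by
  intro xb ht hf
  have hnear : ∀ᶠ y in 𝓝 xb, 1 + a * y ≠ 0 :=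
    (continuous_const.add (continuous_const.mul continuous_id)).continuousAt.eventually_ne ht
  have hg : ∀ y, 1 + a * y ≠ 0 → HasDerivAt (fun y => (b * (1 + a * y) ^ 2)⁻¹)
      (-(2 * a) * (b * (1 + a * y) ^ 3)⁻¹) y := fun y hy =>
    (hasDerivAt_inv_mul_pow hb 2 hy).congr_deriv (by norm_num)
  have hg₁ : HasDerivAt (fun y => -(2 * a) * (b * (1 + a * y) ^ 3)⁻¹)
      (6 * a ^ 2 * (b * (1 + a * xb) ^ 4)⁻¹) xb :=
    ((hasDerivAt_inv_mul_pow hb 3 ht).const_mul _).congr_deriv (by norm_num; ring)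
  have hS : (b * (1 + a * xb) ^ 2)⁻¹ * (6 * a ^ 2 * (b * (1 + a * xb) ^ 4)⁻¹)
      = 3 / 2 * (-(2 * a) * (b * (1 + a * xb) ^ 3)⁻¹) ^ 2 := by
    field_simp
    ring
  rw [abar0_eq_comp_mul_cube]
  exact psi31_comp_mul_cube ha0 (hnear.mono fun y hy => hasDerivAt_phi c hb hy)
    (hnear.mono hg) hg₁ hS hf (inv_ne_zero (mul_ne_zero hb (pow_ne_zero 2 ht)))
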